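/- (Fano-type minimax lower bound) Let (Θ, ρ) be a pseudometric space, let (𝒳, 𝒜) be a measurable space, and let (P_θ)_{θ ∈ Θ} be a family of probability measures on (𝒳, 𝒜). Suppose θ₁, …, θ_N ∈ Θ with N ≥ 2 satisfy ρ(θ_i, θ_j) ≥ ε for all i ≠ j, and that the Kullback–Leibler divergence satisfies KL(P_{θ_i} ‖ P_{θ_j}) ≤ D for all i, j. Then for every measurable estimator θ̂ : 𝒳 → Θ, sup_{1 ≤ i ≤ N} E_{X ∼ P_{θ_i}}[ ρ(θ̂(X), θ_i)² ] ≥ (ε²/4) · (1 − (D + log 2)/log N). -/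

import Mathlib

/-!
The sets `A i = {x | dist (θ̂ x) (θ i) < ε/2}` are pairwise disjoint by separation, so under a
fixed `P_{θ_j}` one of them, say `A i`, has probability at most `1/N`. The Donsker–Varadhan
inequality with test function `log N · 1_{A i}` compares `P_{θ_i}` with `P_{θ_j}` and gives
`P_{θ_i}(A i) ≤ (D + log 2)/log N`; on the complement the squared loss is at least `ε²/4`,
and Markov's inequality concludes.
-/

open MeasureTheory Classical
open scoped ENNReal

/-- The Kullback–Leibler divergence between two measures, valued in `ℝ≥0∞`:
it is `∫ log(dP/dQ) dP` when `P ≪ Q` and this integral makes sense, and `∞` otherwise. -/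
noncomputable def klDiv {X : Type*} [MeasurableSpace X] (P Q : Measure X) : ℝ≥0∞ :=
  if P ≪ Q ∧ Integrable (llr P Q) P then ENNReal.ofReal (∫ x, llr P Q x ∂P) else ⊤

section

open Real

variable {𝒳 : Type*} [MeasurableSpace 𝒳] {μ ν : Measure 𝒳}

lemma klDiv_le_ofReal_iff {D : ℝ} (hD : 0 ≤ D) :
    klDiv μ ν ≤ ENNReal.ofReal D ↔
      μ ≪ ν ∧ Integrable (llr μ ν) μ ∧ ∫ x, llr μ ν x ∂μ ≤ D := by
  unfold klDiv
  split_ifs with h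
  · simp [h, ENNReal.ofReal_le_ofReal_iff hD]
  · simp only [top_le_iff, ENNReal.ofReal_ne_top, false_iff]
    tauto

/-- Donsker–Varadhan: Gibbs' inequality for `μ` against the tilted measure `ν.tilted f`. -/
lemma integral_sub_log_integral_exp_le_integral_llr [IsProbabilityMeasure μ]
    [IsProbabilityMeasure ν] {f : 𝒳 → ℝ} (hμν : μ ≪ ν) (h_int : Integrable (llr μ ν) μ)
    (hfμ : Integrable f μ) (hfν : Integrable (fun x ↦ exp (f x)) ν) :
    ∫ x, f x ∂μ - log (∫ x, exp (f x) ∂ν) ≤ ∫ x, llr μ ν x ∂μ := by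
  have := isProbabilityMeasure_tilted hfν
  have h := InformationTheory.integral_llr_add_sub_measure_univ_nonneg
    (hμν.trans (absolutelyContinuous_tilted hfν))
    (integrable_llr_tilted_right hμν hfμ h_int hfν)
  rw [integral_llr_tilted_right hμν hfμ hfν h_int] at h
  simp only [probReal_univ] at h
  linarith

lemma mul_measureReal_sub_log_le_integral_llr [IsProbabilityMeasure μ]
    [IsProbabilityMeasure ν] (hμν : μ ≪ ν) (h_int : Integrable (llr μ ν) μ) {A : Set 𝒳}
    (hA : MeasurableSet A) (t : ℝ) :
    t * μ.real A - log (1 + (exp t - 1) * ν.real A) ≤ ∫ x, llr μ ν x ∂μ := by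
  have h_exp : (fun x ↦ exp (A.indicator (fun _ ↦ t) x))
      = fun x ↦ 1 + A.indicator (fun _ ↦ exp t - 1) x := by
    ext x
    by_cases hx : x ∈ A <;> simp [hx]
  have h_int_exp : Integrable (fun x ↦ 1 + A.indicator (fun _ ↦ exp t - 1) x) ν :=
    (integrable_const _).add ((integrable_const _).indicator hA)
  have h := integral_sub_log_integral_exp_le_integral_llr hμν h_int
    ((integrable_const t).indicator hA) (h_exp ▸ h_int_exp)
  rw [h_exp, integral_add (integrable_const _) ((integrable_const _).indicator hA),
    integral_indicator_const _ hA, integral_indicator_const _ hA] at h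
  simpa [mul_comm] using h

lemma measureReal_le_of_integral_llr_le [IsProbabilityMeasure μ] [IsProbabilityMeasure ν]
    (hμν : μ ≪ ν) (h_int : Integrable (llr μ ν) μ) {D : ℝ}
    (hD : ∫ x, llr μ ν x ∂μ ≤ D) {N : ℝ} (hN : 1 < N) {A : Set 𝒳} (hA : MeasurableSet A)
    (hνA : ν.real A ≤ N⁻¹) :
    μ.real A ≤ (D + log 2) / log N := by
  have h := mul_measureReal_sub_log_le_integral_llr hμν h_int hA (log N)
  rw [exp_log (by linarith)] at h
  have h_arg : 1 + (N - 1) * ν.real A ≤ 2 := by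
    have : (N - 1) * ν.real A ≤ (N - 1) * N⁻¹ := by gcongr
    have : (N - 1) * N⁻¹ = 1 - N⁻¹ := by field_simp
    linarith [inv_pos.2 (by linarith : 0 < N)]
  have h_log : log (1 + (N - 1) * ν.real A) ≤ log 2 :=
    log_le_log (by nlinarith [measureReal_nonneg (μ := ν) (s := A)]) h_arg
  rw [le_div_iff₀ (log_pos hN)]
  linarith

lemma exists_measureReal_le_inv_card [IsProbabilityMeasure ν] {ι : Type*} [Fintype ι]
    [Nonempty ι] {A : ι → Set 𝒳} (hA : ∀ i, MeasurableSet (A i))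
    (h_disj : Pairwise (Function.onFun Disjoint A)) :
    ∃ i, ν.real (A i) ≤ (Fintype.card ι : ℝ)⁻¹ := by
  have h_sum : ∑ i, ν.real (A i) ≤ ∑ _i : ι, (Fintype.card ι : ℝ)⁻¹ := by
    rw [← measureReal_iUnion_fintype h_disj hA, Finset.sum_const, Finset.card_univ,
      nsmul_eq_mul, mul_inv_cancel₀ (by simp)]
    exact measureReal_le_one
  obtain ⟨i, -, hi⟩ := Finset.exists_le_of_sum_le Finset.univ_nonempty h_sum
  exact ⟨i, hi⟩

end

lemma mul_measureReal_dist_ge_le_lintegral_dist_sq {𝒳 Θ : Type*} [MeasurableSpace 𝒳]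
    [PseudoMetricSpace Θ] [MeasurableSpace Θ] [OpensMeasurableSpace Θ] (μ : Measure 𝒳)
    [IsFiniteMeasure μ] {f : 𝒳 → Θ} (hf : Measurable f) (y : Θ) {r : ℝ} (hr : 0 ≤ r) :
    ENNReal.ofReal (r ^ 2 * μ.real {x | r ≤ dist (f x) y})
      ≤ ∫⁻ x, ENNReal.ofReal (dist (f x) y ^ 2) ∂μ := by
  rw [ENNReal.ofReal_mul (by positivity), ofReal_measureReal]
  calc ENNReal.ofReal (r ^ 2) * μ {x | r ≤ dist (f x) y}
      ≤ ENNReal.ofReal (r ^ 2)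
          * μ {x | ENNReal.ofReal (r ^ 2) ≤ ENNReal.ofReal (dist (f x) y ^ 2)} :=
        mul_le_mul_right (measure_mono fun _ hx ↦
          ENNReal.ofReal_le_ofReal (pow_le_pow_left₀ hr hx 2)) _
    _ ≤ ∫⁻ x, ENNReal.ofReal (dist (f x) y ^ 2) ∂μ :=
        mul_meas_ge_le_lintegral₀ (by fun_prop) _

/-- Fano-type minimax lower bound: if `θ₁, …, θ_N` are `ε`-separated in
the pseudometric `ρ = dist` and all pairwise KL divergences are at most `D`, then any
measurable estimator has worst-case squared-distance risk at least
`(ε²/4)·(1 − (D + log 2)/log N)`. -/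
theorem fano_minimax_lower_bound
    {Θ 𝒳 : Type*} [PseudoMetricSpace Θ] [MeasurableSpace Θ] [OpensMeasurableSpace Θ]
    [MeasurableSpace 𝒳] (P : Θ → Measure 𝒳)
    (N : ℕ) (hN : 2 ≤ N) (θ : Fin N → Θ)
    (hP : ∀ i, IsProbabilityMeasure (P (θ i)))
    (ε D : ℝ) (hε : 0 ≤ ε) (hD : 0 ≤ D)
    (hsep : ∀ i j, i ≠ j → ε ≤ dist (θ i) (θ j))
    (hKL : ∀ i j, klDiv (P (θ i)) (P (θ j)) ≤ ENNReal.ofReal D)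
    (est : 𝒳 → Θ) (hest : Measurable est) :
    ∃ i : Fin N,
      ENNReal.ofReal (ε ^ 2 / 4 * (1 - (D + Real.log 2) / Real.log N))
        ≤ ∫⁻ x, ENNReal.ofReal (dist (est x) (θ i) ^ 2) ∂(P (θ i)) := by
  let j₀ : Fin N := ⟨0, by omega⟩
  let A : Fin N → Set 𝒳 := fun i ↦ {x | dist (est x) (θ i) < ε / 2}
  have hA : ∀ i, MeasurableSet (A i) := fun i ↦ measurableSet_lt (by fun_prop) measurable_const
  have h_disj : Pairwise (Function.onFun Disjoint A) := fun i j hij ↦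
    Set.disjoint_left.2 fun x (hxi : dist _ _ < _) (hxj : dist _ _ < _) ↦ by
      linarith [hsep i j hij, dist_triangle_left (θ i) (θ j) (est x)]
  have : Nonempty (Fin N) := ⟨j₀⟩
  have := hP j₀
  obtain ⟨i, hi⟩ := exists_measureReal_le_inv_card (ν := P (θ j₀)) hA h_disj
  rw [Fintype.card_fin] at hi
  have := hP i
  obtain ⟨hac, h_int, h_llr⟩ := (klDiv_le_ofReal_iff hD).1 (hKL i j₀)
  have h_success := measureReal_le_of_integral_llr_le hac h_int h_llr
    (Nat.one_lt_cast.2 hN) (hA i) hi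
  refine ⟨i, le_trans ?_ (mul_measureReal_dist_ge_le_lintegral_dist_sq _ hest (θ i)
    (by positivity : 0 ≤ ε / 2))⟩
  have h_fail : {x | ε / 2 ≤ dist (est x) (θ i)} = (A i)ᶜ := by ext; simp [A]
  rw [h_fail, probReal_compl_eq_one_sub (hA i)]
  refine ENNReal.ofReal_le_ofReal ?_
  rw [div_pow, show (2 : ℝ) ^ 2 = 4 by norm_num]
  gcongr
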